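/- Let Γ be a core valued constraint language on a finite set D = {d₁,…,d_n}. Then IdPol⁺(Γ) = Pol⁺(Γ_c): an idempotent operation belongs to the positive clone of Γ if and only if it belongs to the positive clone of the language Γ_c obtained from Γ by adding all the unary cost functions N_i. -/

import Mathlib

/-! Basic framework for Valued Constraint Satisfaction Problems (VCSP):
operations, clones, weightings, weighted clones, cost functions,
(weighted/fractional) polymorphisms, expressibility and weighted relational clones. -/

/-- A `k`-ary operation on `D`. -/
abbrev Op (D : Type) (k : ℕ) : Type := (Fin k → D) → D

/-- The `i`-th `k`-ary projection on `D`. -/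
def proj (D : Type) {k : ℕ} (i : Fin k) : Op D k := fun x => x i

/-- An operation is a projection. -/
def IsProj {D : Type} {k : ℕ} (f : Op D k) : Prop := ∃ i : Fin k, f = proj D i

/-- Superposition `f[g₁,…,g_k]` of a `k`-ary operation with `k` many `l`-ary operations. -/
def superposeOp {D : Type} {k l : ℕ} (f : Op D k) (g : Fin k → Op D l) : Op D l :=
  fun x => f fun i => g i x

/-- A clone of operations on `D`: contains all projections and is closed under superposition. -/
structure IsClone {D : Type} (C : ∀ k, Set (Op D k)) : Prop where
  proj_mem : ∀ (k : ℕ) (i : Fin k), proj D i ∈ C k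
  superpose_mem : ∀ (k l : ℕ) (f : Op D k) (g : Fin k → Op D l),
    f ∈ C k → (∀ i, g i ∈ C l) → superposeOp f g ∈ C l

/-- A `k`-ary weighting of the clone `C`: a rational-valued function on `k`-ary operations,
vanishing outside `C`, summing to `0`, and negative only on projections. -/
structure IsWeighting {D : Type} [Fintype D] [DecidableEq D] (C : ∀ k, Set (Op D k))
    {k : ℕ} (ω : Op D k → ℚ) : Prop where
  support_mem : ∀ f : Op D k, ω f ≠ 0 → f ∈ C k
  sum_zero : ∑ f : Op D k, ω f = 0
  neg_imp_proj : ∀ f : Op D k, ω f < 0 → IsProj f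

/-- Superposition of a `k`-ary weighting with `k` many `l`-ary operations. -/
def wSuperpose {D : Type} [Fintype D] [DecidableEq D] {k l : ℕ}
    (ω : Op D k → ℚ) (g : Fin k → Op D l) : Op D l → ℚ :=
  fun f' => ∑ f ∈ Finset.univ.filter (fun f : Op D k => superposeOp f g = f'), ω f

/-- A weighted clone over the clone `C`: a nonempty family of weightings of `C` closed under
non-negative scaling, addition of weightings of equal arity and proper superposition. -/
structure IsWeightedClone {D : Type} [Fintype D] [DecidableEq D]
    (C : ∀ k, Set (Op D k)) (W : ∀ k, Set (Op D k → ℚ)) : Prop where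
  clone : IsClone C
  weighting : ∀ (k : ℕ), ∀ ω ∈ W k, IsWeighting C ω
  nonempty : ∃ k, (W k).Nonempty
  scale_mem : ∀ (k : ℕ) (c : ℚ), 0 ≤ c → ∀ ω ∈ W k, (fun f => c * ω f) ∈ W k
  add_mem : ∀ (k : ℕ), ∀ ω₁ ∈ W k, ∀ ω₂ ∈ W k, (fun f => ω₁ f + ω₂ f) ∈ W k
  superpose_mem : ∀ (k l : ℕ), ∀ ω ∈ W k, ∀ g : Fin k → Op D l,
    (∀ i, g i ∈ C l) → IsWeighting C (wSuperpose ω g) → wSuperpose ω g ∈ W l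

/-- The positive clone of a family of weightings: all projections together with all operations
receiving positive weight from some weighting in the family. -/
def posClone {D : Type} [Fintype D] [DecidableEq D] (W : ∀ k, Set (Op D k → ℚ)) :
    ∀ k, Set (Op D k) :=
  fun k => {f | IsProj f ∨ ∃ ω ∈ W k, 0 < ω f}

/-- An `r`-ary cost function on `D`, with values in `ℚ ∪ {∞}`. -/
abbrev CostF (D : Type) (r : ℕ) : Type := (Fin r → D) → WithTop ℚ

/-- The feasibility relation of a cost function. -/
def Feas {D : Type} {r : ℕ} (ϱ : CostF D r) : Set (Fin r → D) := {x | ϱ x ≠ ⊤}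

/-- Coordinate-wise application of a `k`-ary operation to `k` many `r`-tuples. -/
def appRows {D : Type} {k r : ℕ} (f : Op D k) (xs : Fin k → Fin r → D) : Fin r → D :=
  fun j => f fun i => xs i j

/-- `f` is a polymorphism of `ϱ`: `Feas ϱ` is closed under coordinate-wise application of `f`. -/
def IsPolymorphism {D : Type} {k r : ℕ} (f : Op D k) (ϱ : CostF D r) : Prop :=
  ∀ xs : Fin k → Fin r → D, (∀ i, xs i ∈ Feas ϱ) → appRows f xs ∈ Feas ϱ

/-- A valued constraint language on `D`: a set of cost functions of various arities. -/
abbrev VLang (D : Type) : Type := Set (Σ r : ℕ, CostF D r)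

/-- The clone of polymorphisms of a language. -/
def Pol {D : Type} (Γ : VLang D) : ∀ k, Set (Op D k) :=
  fun _ => {f | ∀ ϱ ∈ Γ, IsPolymorphism f ϱ.2}

/-- Multiplication of an element of `ℚ ∪ {∞}` by a rational scalar (`c·∞ = ∞`). -/
def qmul (c : ℚ) (x : WithTop ℚ) : WithTop ℚ := WithTop.map (fun q => c * q) x

/-- The sum `∑_f ω(f)·ϱ(f(x₁,…,x_k))`, over operations with non-zero weight. -/
def wSum {D : Type} [Fintype D] [DecidableEq D] {k r : ℕ}
    (ω : Op D k → ℚ) (ϱ : CostF D r) (xs : Fin k → Fin r → D) : WithTop ℚ :=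
  ∑ f ∈ Finset.univ.filter (fun f : Op D k => ω f ≠ 0), qmul (ω f) (ϱ (appRows f xs))

/-- `ω` is a weighted polymorphism of the language `Γ`. -/
def IsWeightedPolymorphism {D : Type} [Fintype D] [DecidableEq D] (Γ : VLang D)
    {k : ℕ} (ω : Op D k → ℚ) : Prop :=
  IsWeighting (Pol Γ) ω ∧
    ∀ ϱ ∈ Γ, ∀ xs : Fin k → Fin ϱ.1 → D, (∀ i, xs i ∈ Feas ϱ.2) → wSum ω ϱ.2 xs ≤ 0

/-- The weighted polymorphisms of a language. -/
def wPol {D : Type} [Fintype D] [DecidableEq D] (Γ : VLang D) :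
    ∀ k, Set (Op D k → ℚ) :=
  fun _ => {ω | IsWeightedPolymorphism Γ ω}

/-- The positive clone `Pol⁺(Γ)` of a language. -/
def PolPlus {D : Type} [Fintype D] [DecidableEq D] (Γ : VLang D) : ∀ k, Set (Op D k) :=
  posClone (wPol Γ)

/-- The map `D → D` induced by a unary operation. -/
def unaryFun {D : Type} (f : Op D 1) : D → D := fun x => f fun _ => x

/-- A language is a core if every unary operation in its positive clone is bijective. -/
def IsCore {D : Type} [Fintype D] [DecidableEq D] (Γ : VLang D) : Prop :=
  ∀ f ∈ PolPlus Γ 1, Function.Bijective (unaryFun f)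

/-- An idempotent operation. -/
def Idem {D : Type} {k : ℕ} (f : Op D k) : Prop := ∀ x : D, (f fun _ => x) = x

/-- A cyclic operation: `f(x₁,…,x_k) = f(x₂,…,x_k,x₁)`. -/
def CyclicOp {D : Type} {k : ℕ} (f : Op D k) : Prop :=
  ∀ x : Fin k → D, f x = f (x ∘ ⇑(finRotate k))

/-- A conservative operation. -/
def Conservative {D : Type} {k : ℕ} (f : Op D k) : Prop :=
  ∀ x : Fin k → D, ∃ i, f x = x i

/-- A Taylor operation. -/
def IsTaylor {D : Type} {k : ℕ} (t : Op D k) : Prop :=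
  Idem t ∧ ∀ j : Fin k, ∃ a b : Fin k → Fin 2, a j = 0 ∧ b j = 1 ∧
    ∀ u : Fin 2 → D, (t fun i => u (a i)) = t fun i => u (b i)

/-- An instance of `VCSP(Γ)` with variable set `V`: a finite multiset of constraints,
each a tuple of variables together with a cost function from `Γ`. -/
structure VInstance (D : Type) (Γ : VLang D) (V : Type) where
  cons : Multiset (Σ r : ℕ, (Fin r → V) × CostF D r)
  mem_lang : ∀ c ∈ cons, (⟨c.1, c.2.2⟩ : Σ r : ℕ, CostF D r) ∈ Γ

/-- The cost of an assignment for a VCSP instance. -/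
def VInstance.cost {D V : Type} {Γ : VLang D} (I : VInstance D Γ V) (s : V → D) :
    WithTop ℚ :=
  (I.cons.map fun c => c.2.2 fun i => s (c.2.1 i)).sum

/-- A cost function is expressible over a language `Δ`. -/
def Expressible {D : Type} [Fintype D] [DecidableEq D] (Δ : VLang D) {r : ℕ}
    (ϱ : CostF D r) : Prop :=
  ∃ (n : ℕ) (I : VInstance D Δ (Fin n)) (v : Fin r → Fin n),
    ∀ x : Fin r → D,
      ϱ x = (Finset.univ.filter fun s : Fin n → D => ∀ i, s (v i) = x i).inf fun s => I.cost s

/-- A language is closed under expressibility, non-negative scaling and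
addition of rational constants. -/
def IsWClosed {D : Type} [Fintype D] [DecidableEq D] (Δ : VLang D) : Prop :=
  (∀ (r : ℕ) (ϱ : CostF D r), Expressible Δ ϱ → (⟨r, ϱ⟩ : Σ r : ℕ, CostF D r) ∈ Δ) ∧
  (∀ (r : ℕ) (ϱ : CostF D r) (c : ℚ), 0 ≤ c → (⟨r, ϱ⟩ : Σ r : ℕ, CostF D r) ∈ Δ →
    (⟨r, fun x => qmul c (ϱ x)⟩ : Σ r : ℕ, CostF D r) ∈ Δ) ∧
  (∀ (r : ℕ) (ϱ : CostF D r) (c : ℚ), (⟨r, ϱ⟩ : Σ r : ℕ, CostF D r) ∈ Δ →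
    (⟨r, fun x => ϱ x + (c : WithTop ℚ)⟩ : Σ r : ℕ, CostF D r) ∈ Δ)

/-- The weighted relational clone generated by `Γ`: the smallest language containing `Γ`
closed under expressibility, non-negative scaling and addition of rational constants. -/
def wRelClo {D : Type} [Fintype D] [DecidableEq D] (Γ : VLang D) : VLang D :=
  ⋂₀ {Δ : VLang D | Γ ⊆ Δ ∧ IsWClosed Δ}

/-- The weighting `(1/k)(∑_i 1_{f_i} − ∑_i 1_{π_i})` associated with a `k`-tuple of
`k`-ary operations (a multimorphism), weights added with multiplicity. -/
def multimorphismW {D : Type} [Fintype D] [DecidableEq D] {k : ℕ} (F : Fin k → Op D k) :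
    Op D k → ℚ :=
  fun g => (1 / (k : ℚ)) *
    (((Finset.univ.filter fun i : Fin k => F i = g).card : ℚ) -
     ((Finset.univ.filter fun i : Fin k => proj D i = g).card : ℚ))

/-- `Γ` admits the multimorphism `⟨F 0, …, F (k-1)⟩`. -/
def AdmitsMultimorphism {D : Type} [Fintype D] [DecidableEq D] {k : ℕ}
    (Γ : VLang D) (F : Fin k → Op D k) : Prop :=
  multimorphismW F ∈ wPol Γ k

/-- An `m`-ary fractional operation: a probability distribution on `m`-ary operations. -/
def IsFracOp {D : Type} [Fintype D] [DecidableEq D] {m : ℕ} (ω : Op D m → ℝ) : Prop :=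
  (∀ f, 0 ≤ ω f) ∧ ∑ f : Op D m, ω f = 1

/-- Multiplication of an element of `ℚ ∪ {∞}` by a real scalar, landing in `ℝ ∪ {∞}`. -/
def rmul (c : ℝ) (x : WithTop ℚ) : WithTop ℝ := WithTop.map (fun q : ℚ => c * (q : ℝ)) x

/-- `ω` is a fractional polymorphism of the language `Γ`. -/
def IsFracPolymorphism {D : Type} [Fintype D] [DecidableEq D] (Γ : VLang D) {m : ℕ}
    (ω : Op D m → ℝ) : Prop :=
  IsFracOp ω ∧ ∀ ϱ ∈ Γ, ∀ xs : Fin m → Fin ϱ.1 → D, (∀ i, xs i ∈ Feas ϱ.2) →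
    (∑ g ∈ Finset.univ.filter fun g : Op D m => 0 < ω g, rmul (ω g) (ϱ.2 (appRows g xs)))
      ≤ rmul (1 / (m : ℝ)) (∑ i : Fin m, ϱ.2 (xs i))

/-- The positive clone `fPol⁺(Γ)` defined via fractional polymorphisms. -/
def fPolPlus {D : Type} [Fintype D] [DecidableEq D] (Γ : VLang D) : ∀ k, Set (Op D k) :=
  fun k => {f | IsProj f ∨ ∃ ω : Op D k → ℝ, IsFracPolymorphism Γ ω ∧ 0 < ω f}

/-- Application of a binary operation to two elements. -/
def ap2 {D : Type} (f : Op D 2) (a b : D) : D := f ![a, b]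

/-- Application of a ternary operation to three elements. -/
def ap3 {D : Type} (f : Op D 3) (a b c : D) : D := f ![a, b, c]

/-- A ternary operation restricts to a majority operation on a subset `S`. -/
def IsMajorityOn {D : Type} (f : Op D 3) (S : Set D) : Prop :=
  ∀ x ∈ S, ∀ y ∈ S, ap3 f x x y = x ∧ ap3 f x y x = x ∧ ap3 f y x x = x

/-- A ternary operation restricts to a minority operation on a subset `S`. -/
def IsMinorityOn {D : Type} (f : Op D 3) (S : Set D) : Prop :=
  ∀ x ∈ S, ∀ y ∈ S, ap3 f x x y = y ∧ ap3 f x y x = y ∧ ap3 f y x x = y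

/-- The language `Γ_c`: `Γ` together with all unary cost functions `N_a`
(`N_a(a) = 0`, `N_a(x) = ∞` for `x ≠ a`). -/
def withConstants {D : Type} [DecidableEq D] (Γ : VLang D) : VLang D :=
  Γ ∪ {p : Σ r : ℕ, CostF D r |
        ∃ a : D, p = ⟨1, fun x => if x 0 = a then (0 : WithTop ℚ) else ⊤⟩}

/-- A language is conservative if it contains every `{0,1}`-valued unary cost function. -/
def ConservativeLang {D : Type} (Γ : VLang D) : Prop :=
  ∀ ϱ : CostF D 1, (∀ x, ϱ x = 0 ∨ ϱ x = 1) → (⟨1, ϱ⟩ : Σ r : ℕ, CostF D r) ∈ Γ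

/-- The coordinate-wise action of a `k`-ary operation on `A` on the power `A^n`. -/
def opPow {A : Type} (n : ℕ) {k : ℕ} (f : Op A k) : Op (Fin n → A) k :=
  fun xs c => f fun i => xs i c

/-- Regrouping an `(n·r)`-tuple over `A` into an `r`-tuple of elements of `A^n`. -/
def regroup (A : Type) (n r : ℕ) (y : Fin (n * r) → A) : Fin r → Fin n → A :=
  fun j c => y (finProdFinEquiv (c, j))

/-! Let `Γ` be a core. For a unary weighted polymorphism `μ` of `Γ`, summing the inequality
`∑ μ(u)·ϱ(u ∘ z) ≤ 0` over the finite set of feasible tuples `z`, which every `u` of positive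
weight permutes, shows that it is an equality for each `z`; summing the "variance"
`∑ μ(u)·(ϱ(u ∘ z) - ϱ(z))²` in the same way shows that it vanishes. So every unary operation of
`Pol⁺(Γ)` preserves all cost functions of `Γ`. In particular the diagonal `a ↦ g(a,…,a)` of an
operation `g` in the support of a weighted polymorphism `ω` is such an automorphism, and composing
`g` with its inverse gives an idempotent operation with exactly the same costs. Pushing `ω` forward
along this normalization gives a weighted polymorphism of `Γ_c` (the `N_a` only ask for
idempotency) that still weights an idempotent `f` positively. -/

theorem apply_eq_of_sum_mul_apply_nonpos {ι α : Type*} [Fintype ι] {S : Finset α}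
    {μ : ι → ℚ} {T : ι → α → α} (V : α → ℚ) (hμ : ∑ i, μ i = 0)
    (hneg : ∀ i, μ i < 0 → ∀ z ∈ S, T i z = z)
    (hbij : ∀ i, 0 < μ i → Set.BijOn (T i) S S)
    (hle : ∀ z ∈ S, ∑ i, μ i * V (T i z) ≤ 0) {i : ι} (hi : 0 < μ i) {z : α} (hz : z ∈ S) :
    V (T i z) = V z := by
  have hinv : ∀ j, μ j ≠ 0 → ∀ F : α → ℚ, ∑ z ∈ S, F (T j z) = ∑ z ∈ S, F z := by
    intro j hj F
    rcases hj.lt_or_gt with hj | hj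
    · exact Finset.sum_congr rfl fun z hz => by rw [hneg j hj z hz]
    · exact Finset.sum_nbij (T j) (hbij j hj).mapsTo (hbij j hj).injOn (hbij j hj).surjOn
        fun _ _ => rfl
  have htotal : ∀ F : α → ℚ, ∑ z ∈ S, ∑ i, μ i * F (T i z) = 0 := by
    intro F
    rw [Finset.sum_comm]
    calc ∑ i, ∑ z ∈ S, μ i * F (T i z) = ∑ i, μ i * ∑ z ∈ S, F z := by
          refine Finset.sum_congr rfl fun i _ => ?_
          rw [← Finset.mul_sum]
          rcases eq_or_ne (μ i) 0 with h | h
          · simp [h]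
          · rw [hinv i h]
      _ = 0 := by rw [← Finset.sum_mul, hμ, zero_mul]
  have hmean : ∀ z ∈ S, ∑ i, μ i * V (T i z) = 0 :=
    (Finset.sum_eq_zero_iff_of_nonpos hle).1 (htotal V)
  have hvar : ∀ z ∈ S, ∑ i, μ i * (V (T i z) - V z) ^ 2 = ∑ i, μ i * V (T i z) ^ 2 := by
    intro z hz
    have hexpand : ∑ i, μ i * (V (T i z) - V z) ^ 2 = ∑ i, μ i * V (T i z) ^ 2
        - 2 * V z * ∑ i, μ i * V (T i z) + V z ^ 2 * ∑ i, μ i := by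
      simp only [Finset.mul_sum, ← Finset.sum_sub_distrib, ← Finset.sum_add_distrib]
      exact Finset.sum_congr rfl fun i _ => by ring
    rw [hexpand, hmean z hz, hμ]
    ring
  have hterm : ∀ z ∈ S, ∀ i, 0 ≤ μ i * (V (T i z) - V z) ^ 2 := by
    intro z hz i
    rcases le_or_gt 0 (μ i) with h | h
    · positivity
    · simp [hneg i h z hz]
  have hvar_zero : ∑ z ∈ S, ∑ i, μ i * (V (T i z) - V z) ^ 2 = 0 := by
    rw [Finset.sum_congr rfl hvar]
    exact htotal fun z => V z ^ 2
  have hz_zero := (Finset.sum_eq_zero_iff_of_nonneg fun z hz =>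
    Finset.sum_nonneg fun i _ => hterm z hz i).1 hvar_zero z hz
  have hi_zero := (Finset.sum_eq_zero_iff_of_nonneg fun i _ => hterm z hz i).1 hz_zero i
    (Finset.mem_univ i)
  simpa [hi.ne', sub_eq_zero] using hi_zero

theorem WithTop.eq_of_untop₀_eq {α : Type*} [Zero α] {a b : WithTop α} (ha : a ≠ ⊤) (hb : b ≠ ⊤)
    (h : a.untop₀ = b.untop₀) : a = b := by
  rw [← WithTop.coe_untop₀_of_ne_top ha, ← WithTop.coe_untop₀_of_ne_top hb, h]

section Polymorphisms

variable {D : Type}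

theorem proj_mem_Pol (Γ : VLang D) {k : ℕ} (i : Fin k) : proj D i ∈ Pol Γ k :=
  fun _ _ _ hxs => hxs i

theorem IsProj.idem {k : ℕ} {f : Op D k} (hf : IsProj f) : Idem f := by
  obtain ⟨i, rfl⟩ := hf
  exact fun _ => rfl

theorem unaryFun_eq_id_of_isProj {u : Op D 1} (hu : IsProj u) : unaryFun u = id :=
  funext hu.idem

theorem Pol_anti {Γ Δ : VLang D} (h : Γ ⊆ Δ) (k : ℕ) : Pol Δ k ⊆ Pol Γ k :=
  fun _ hf p hp => hf p (h hp)

theorem comp_mem_Feas_of_mem_Pol {Γ : VLang D} {u : Op D 1} (hu : u ∈ Pol Γ 1)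
    {p : Σ r : ℕ, CostF D r} (hp : p ∈ Γ) {z : Fin p.1 → D} (hz : z ∈ Feas p.2) :
    unaryFun u ∘ z ∈ Feas p.2 :=
  hu p hp (fun _ => z) fun _ => hz

def minor {k l : ℕ} (f : Op D k) (σ : Fin k → Fin l) : Op D l := fun x => f (x ∘ σ)

theorem minor_mem_Pol {Γ : VLang D} {k l : ℕ} {f : Op D k} (hf : f ∈ Pol Γ k)
    (σ : Fin k → Fin l) : minor f σ ∈ Pol Γ l :=
  fun p hp xs hxs => hf p hp (xs ∘ σ) fun i => hxs (σ i)

theorem IsProj.minor {k l : ℕ} {f : Op D k} (hf : IsProj f) (σ : Fin k → Fin l) :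
    IsProj (minor f σ) := by
  obtain ⟨i, rfl⟩ := hf
  exact ⟨σ i, rfl⟩

def diagFun {k : ℕ} (g : Op D k) : D → D := fun a => g fun _ => a

theorem unaryFun_minor_const {k : ℕ} (g : Op D k) :
    unaryFun (minor g fun _ => 0) = diagFun g := rfl

open Classical in
noncomputable def idemNormalize {k : ℕ} (g : Op D k) : Op D k :=
  if h : (diagFun g).Bijective then fun x => (Equiv.ofBijective _ h).symm (g x) else g

theorem idem_idemNormalize {k : ℕ} {g : Op D k} (h : (diagFun g).Bijective) :
    Idem (idemNormalize g) := fun a => by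
  rw [idemNormalize, dif_pos h]
  exact Equiv.ofBijective_symm_apply_apply _ h a

theorem idemNormalize_of_idem {k : ℕ} {g : Op D k} (hg : Idem g) : idemNormalize g = g := by
  have h : (diagFun g).Bijective := (funext hg : diagFun g = id) ▸ Function.bijective_id
  rw [idemNormalize, dif_pos h]
  exact funext fun x => (Equiv.symm_apply_eq _).2 (hg (g x)).symm

theorem appRows_idemNormalize {k r : ℕ} {g : Op D k} (h : (diagFun g).Bijective)
    (xs : Fin k → Fin r → D) :
    appRows (idemNormalize g) xs = (Equiv.ofBijective _ h).symm ∘ appRows g xs := by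
  rw [idemNormalize, dif_pos h]
  rfl

theorem mem_Feas_const_iff [DecidableEq D] (a : D) (x : Fin 1 → D) :
    x ∈ Feas (fun y : Fin 1 → D => if y 0 = a then (0 : WithTop ℚ) else ⊤) ↔ x 0 = a := by
  by_cases h : x 0 = a <;> simp [Feas, h]

theorem mem_Pol_withConstants_iff [DecidableEq D] {Γ : VLang D} {k : ℕ} {f : Op D k} :
    f ∈ Pol (withConstants Γ) k ↔ f ∈ Pol Γ k ∧ Idem f := by
  constructor
  · intro hf
    refine ⟨Pol_anti Set.subset_union_left k hf, fun a => ?_⟩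
    have hfeas := hf _ (Or.inr ⟨a, rfl⟩) (fun _ _ => a) fun _ => (mem_Feas_const_iff a _).2 rfl
    exact (mem_Feas_const_iff a _).1 hfeas
  · rintro ⟨hf, hidem⟩ p (hp | ⟨a, rfl⟩) xs hxs
    · exact hf p hp xs hxs
    · have hcol : (fun i => xs i 0) = fun _ => a :=
        funext fun i => (mem_Feas_const_iff a (xs i)).1 (hxs i)
      refine (mem_Feas_const_iff a _).2 ?_
      change f (fun i => xs i 0) = a
      rw [hcol, hidem]

theorem bijOn_comp_Feas [Finite D] {r : ℕ} {ϱ : CostF D r} {φ : D → D}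
    (hφ : φ.Injective) (hmaps : ∀ z ∈ Feas ϱ, φ ∘ z ∈ Feas ϱ) :
    Set.BijOn (φ ∘ ·) (Feas ϱ) (Feas ϱ) :=
  ((Set.toFinite _).injOn_iff_bijOn_of_mapsTo hmaps).1 hφ.comp_left.injOn

theorem cost_symm_comp_eq [Finite D] {r : ℕ} {ϱ : CostF D r} (σ : Equiv.Perm D)
    (hσ : ∀ z ∈ Feas ϱ, ϱ (σ ∘ z) = ϱ z) {z : Fin r → D} (hz : z ∈ Feas ϱ) :
    ϱ (σ.symm ∘ z) = ϱ z := by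
  have hmaps : ∀ w ∈ Feas ϱ, σ ∘ w ∈ Feas ϱ := fun w hw => by
    simpa [Feas, hσ w hw] using hw
  obtain ⟨w, hw, rfl⟩ := (bijOn_comp_Feas σ.injective hmaps).surjOn hz
  rw [hσ w hw, ← Function.comp_assoc, Equiv.symm_comp_self, Function.id_comp]

end Polymorphisms

section Weightings

variable {D : Type} [Fintype D] [DecidableEq D]

theorem wSum_eq_coe {k r : ℕ} (ω : Op D k → ℚ) (ϱ : CostF D r) (xs : Fin k → Fin r → D)
    (hfin : ∀ g, ω g ≠ 0 → appRows g xs ∈ Feas ϱ) :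
    wSum ω ϱ xs = ((∑ g, ω g * (ϱ (appRows g xs)).untop₀ : ℚ) : WithTop ℚ) := by
  rw [← Finset.sum_filter_of_ne fun g _ h => left_ne_zero_of_mul h, wSum, WithTop.coe_sum]
  refine Finset.sum_congr rfl fun g hg => ?_
  rw [← WithTop.coe_untop₀_of_ne_top (hfin g (Finset.mem_filter.1 hg).2)]
  rfl

theorem wSum_nonpos_iff {Γ : VLang D} {k : ℕ} {ω : Op D k → ℚ}
    (hω : ∀ g, ω g ≠ 0 → g ∈ Pol Γ k) {p : Σ r : ℕ, CostF D r} (hp : p ∈ Γ)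
    {xs : Fin k → Fin p.1 → D} (hxs : ∀ i, xs i ∈ Feas p.2) :
    wSum ω p.2 xs ≤ 0 ↔ ∑ g, ω g * (p.2 (appRows g xs)).untop₀ ≤ 0 := by
  rw [wSum_eq_coe ω p.2 xs fun g hg => hω g hg p hp xs hxs]
  exact WithTop.coe_le_zero

def wMap {k l : ℕ} (t : Op D k → Op D l) (ω : Op D k → ℚ) : Op D l → ℚ :=
  fun h => ∑ g ∈ Finset.univ.filter (fun g => t g = h), ω g

variable {k l : ℕ} {t : Op D k → Op D l} {ω : Op D k → ℚ}

theorem sum_wMap_mul (F : Op D l → ℚ) : ∑ h, wMap t ω h * F h = ∑ g, ω g * F (t g) := by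
  rw [← Finset.sum_fiberwise Finset.univ t fun g => ω g * F (t g)]
  refine Finset.sum_congr rfl fun h _ => ?_
  rw [wMap, Finset.sum_mul]
  exact Finset.sum_congr rfl fun g hg => by rw [(Finset.mem_filter.1 hg).2]

theorem exists_ne_zero_of_wMap_ne_zero {h : Op D l} (hh : wMap t ω h ≠ 0) :
    ∃ g, t g = h ∧ ω g ≠ 0 := by
  obtain ⟨g, hg, hne⟩ := Finset.exists_ne_zero_of_sum_ne_zero hh
  exact ⟨g, (Finset.mem_filter.1 hg).2, hne⟩

theorem exists_neg_of_wMap_neg {h : Op D l} (hh : wMap t ω h < 0) :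
    ∃ g, t g = h ∧ ω g < 0 := by
  obtain ⟨g, hg, hneg⟩ := Finset.exists_lt_of_sum_lt (hh.trans_eq Finset.sum_const_zero.symm)
  exact ⟨g, (Finset.mem_filter.1 hg).2, hneg⟩

theorem wMap_pos {g : Op D k} (hg : 0 < ω g) (hfib : ∀ g', t g' = t g → 0 ≤ ω g') :
    0 < wMap t ω (t g) :=
  Finset.sum_pos' (fun g' hg' => hfib g' (Finset.mem_filter.1 hg').2)
    ⟨g, Finset.mem_filter.2 ⟨Finset.mem_univ g, rfl⟩, hg⟩

theorem isWeighting_wMap {C : ∀ k, Set (Op D k)} (hsum : ∑ g, ω g = 0)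
    (hmem : ∀ g, ω g ≠ 0 → t g ∈ C l) (hproj : ∀ g, ω g < 0 → IsProj (t g)) :
    IsWeighting C (wMap t ω) where
  support_mem h hh := by
    obtain ⟨g, rfl, hg⟩ := exists_ne_zero_of_wMap_ne_zero hh
    exact hmem g hg
  sum_zero := (Finset.sum_fiberwise Finset.univ t ω).trans hsum
  neg_imp_proj h hh := by
    obtain ⟨g, rfl, hg⟩ := exists_neg_of_wMap_neg hh
    exact hproj g hg

end Weightings

section PositiveClone

variable {D : Type} [Fintype D] [DecidableEq D] {Γ : VLang D} {k l : ℕ}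

theorem wPol_anti {Δ : VLang D} (h : Γ ⊆ Δ) {ω : Op D k → ℚ} (hω : ω ∈ wPol Δ k) :
    ω ∈ wPol Γ k :=
  ⟨⟨fun g hg => Pol_anti h k (hω.1.support_mem g hg), hω.1.sum_zero, hω.1.neg_imp_proj⟩,
    fun p hp => hω.2 p (h hp)⟩

theorem mem_PolPlus_of_ne_zero {ω : Op D k → ℚ} (hω : ω ∈ wPol Γ k) {g : Op D k}
    (hg : ω g ≠ 0) : g ∈ PolPlus Γ k :=
  hg.lt_or_gt.elim (fun h => Or.inl (hω.1.neg_imp_proj g h)) fun h => Or.inr ⟨ω, hω, h⟩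

theorem PolPlus_subset_Pol : PolPlus Γ k ⊆ Pol Γ k := by
  rintro g (⟨i, rfl⟩ | ⟨ω, hω, hg⟩)
  · exact proj_mem_Pol Γ i
  · exact hω.1.support_mem g hg.ne'

theorem wMap_minor_mem_wPol {ω : Op D k → ℚ} (hω : ω ∈ wPol Γ k) (σ : Fin k → Fin l) :
    wMap (minor · σ) ω ∈ wPol Γ l := by
  have hW : IsWeighting (Pol Γ) (wMap (minor · σ) ω) :=
    isWeighting_wMap hω.1.sum_zero (fun g hg => minor_mem_Pol (hω.1.support_mem g hg) σ)
      fun g hg => (hω.1.neg_imp_proj g hg).minor σ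
  refine ⟨hW, fun p hp ys hys => ?_⟩
  rw [wSum_nonpos_iff hW.support_mem hp hys, sum_wMap_mul]
  exact (wSum_nonpos_iff hω.1.support_mem hp fun i => hys (σ i)).1
    (hω.2 p hp (ys ∘ σ) fun i => hys (σ i))

theorem minor_mem_PolPlus {g : Op D k} (hg : g ∈ PolPlus Γ k) (σ : Fin k → Fin l) :
    minor g σ ∈ PolPlus Γ l := by
  rcases hg with hproj | ⟨ω, hω, hωg⟩
  · exact Or.inl (hproj.minor σ)
  by_cases hproj : IsProj (minor g σ)
  · exact Or.inl hproj
  refine Or.inr ⟨_, wMap_minor_mem_wPol hω σ, wMap_pos hωg fun g' hg' => ?_⟩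
  by_contra hneg
  exact hproj (hg' ▸ (hω.1.neg_imp_proj g' (not_le.1 hneg)).minor σ)

theorem IsCore.bijective_diagFun (hcore : IsCore Γ) {g : Op D k} (hg : g ∈ PolPlus Γ k) :
    (diagFun g).Bijective :=
  unaryFun_minor_const g ▸ hcore _ (minor_mem_PolPlus hg fun _ => 0)

theorem IsCore.cost_comp_eq (hcore : IsCore Γ) {u : Op D 1} (hu : u ∈ PolPlus Γ 1)
    {p : Σ r : ℕ, CostF D r} (hp : p ∈ Γ) {z : Fin p.1 → D} (hz : z ∈ Feas p.2) :
    p.2 (unaryFun u ∘ z) = p.2 z := by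
  classical
  rcases hu with hproj | ⟨μ, hμ, hμu⟩
  · rw [unaryFun_eq_id_of_isProj hproj, Function.id_comp]
  have hV := apply_eq_of_sum_mul_apply_nonpos (S := (Feas p.2).toFinset)
    (T := fun v w => unaryFun v ∘ w) (fun w => (p.2 w).untop₀) hμ.1.sum_zero
    (fun v hv _ _ => by rw [unaryFun_eq_id_of_isProj (hμ.1.neg_imp_proj v hv), Function.id_comp])
    (fun v hv => (Set.coe_toFinset (Feas p.2)).symm ▸
      bijOn_comp_Feas (hcore v (Or.inr ⟨μ, hμ, hv⟩)).1
        fun _ hw => comp_mem_Feas_of_mem_Pol (hμ.1.support_mem v hv.ne') hp hw)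
    (fun w hw => by
      have hw : w ∈ Feas p.2 := Set.mem_toFinset.1 hw
      exact (wSum_nonpos_iff hμ.1.support_mem hp fun _ => hw).1 (hμ.2 p hp _ fun _ => hw))
    hμu (Set.mem_toFinset.2 hz)
  exact WithTop.eq_of_untop₀_eq
    (comp_mem_Feas_of_mem_Pol (hμ.1.support_mem u hμu.ne') hp hz) hz hV

theorem IsCore.cost_appRows_idemNormalize (hcore : IsCore Γ) {g : Op D k}
    (hg : g ∈ PolPlus Γ k) {p : Σ r : ℕ, CostF D r} (hp : p ∈ Γ)
    {xs : Fin k → Fin p.1 → D} (hxs : ∀ i, xs i ∈ Feas p.2) :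
    p.2 (appRows (idemNormalize g) xs) = p.2 (appRows g xs) := by
  rw [appRows_idemNormalize (hcore.bijective_diagFun hg)]
  exact cost_symm_comp_eq _
    (fun w hw => hcore.cost_comp_eq (minor_mem_PolPlus hg fun _ => 0) hp hw)
    (PolPlus_subset_Pol hg p hp xs hxs)

theorem IsCore.wMap_idemNormalize_mem_wPol (hcore : IsCore Γ) {ω : Op D k → ℚ}
    (hω : ω ∈ wPol Γ k) : wMap idemNormalize ω ∈ wPol (withConstants Γ) k := by
  have hplus : ∀ g, ω g ≠ 0 → g ∈ PolPlus Γ k := fun g hg => mem_PolPlus_of_ne_zero hω hg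
  have hmem : ∀ g, ω g ≠ 0 → idemNormalize g ∈ Pol (withConstants Γ) k := fun g hg =>
    mem_Pol_withConstants_iff.2
      ⟨fun p hp xs hxs => by
          have h : p.2 (appRows g xs) ≠ ⊤ := hω.1.support_mem g hg p hp xs hxs
          rwa [← hcore.cost_appRows_idemNormalize (hplus g hg) hp hxs] at h,
        idem_idemNormalize (hcore.bijective_diagFun (hplus g hg))⟩
  have hW : IsWeighting (Pol (withConstants Γ)) (wMap idemNormalize ω) :=
    isWeighting_wMap hω.1.sum_zero hmem fun g hg => by
      have hproj := hω.1.neg_imp_proj g hg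
      rwa [idemNormalize_of_idem hproj.idem]
  refine ⟨hW, ?_⟩
  rintro p (hp | ⟨a, rfl⟩) ys hys
  · rw [wSum_nonpos_iff hW.support_mem (Or.inl hp) hys, sum_wMap_mul]
    refine le_of_eq_of_le (Finset.sum_congr rfl fun g _ => ?_)
      ((wSum_nonpos_iff hω.1.support_mem hp hys).1 (hω.2 p hp ys hys))
    rcases eq_or_ne (ω g) 0 with h | h
    · rw [h, zero_mul, zero_mul]
    · rw [hcore.cost_appRows_idemNormalize (hplus g h) hp hys]
  · rw [wSum_nonpos_iff hW.support_mem (Or.inr ⟨a, rfl⟩) hys]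
    refine (Finset.sum_eq_zero fun h _ => ?_).le
    rcases eq_or_ne (wMap idemNormalize ω h) 0 with hh | hh
    · rw [hh, zero_mul]
    · have hfeas := (mem_Feas_const_iff a _).1 (hW.support_mem h hh _ (Or.inr ⟨a, rfl⟩) ys hys)
      simp [hfeas]

theorem wMap_idemNormalize_pos {ω : Op D k → ℚ} (hneg : ∀ g, ω g < 0 → IsProj g)
    {f : Op D k} (hf : Idem f) (hωf : 0 < ω f) : 0 < wMap idemNormalize ω f := by
  have hpos := wMap_pos (t := idemNormalize) hωf fun g hg => by
    by_contra hωg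
    rw [idemNormalize_of_idem (hneg g (not_le.1 hωg)).idem, idemNormalize_of_idem hf] at hg
    exact hωg (hg ▸ hωf.le)
  rwa [idemNormalize_of_idem hf] at hpos

end PositiveClone

theorem idPolPlus_eq_polPlus_withConstants_general {D : Type} [Fintype D] [DecidableEq D]
    (Γ : VLang D) (hcore : IsCore Γ) :
    ∀ (k : ℕ) (f : Op D k),
      (f ∈ PolPlus Γ k ∧ Idem f) ↔ f ∈ PolPlus (withConstants Γ) k := by
  intro k f
  constructor
  · rintro ⟨hproj | ⟨ω, hω, hωf⟩, hf⟩
    · exact Or.inl hproj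
    · exact Or.inr ⟨wMap idemNormalize ω, hcore.wMap_idemNormalize_mem_wPol hω,
        wMap_idemNormalize_pos hω.1.neg_imp_proj hf hωf⟩
  · rintro (hproj | ⟨ω, hω, hωf⟩)
    · exact ⟨Or.inl hproj, hproj.idem⟩
    · exact ⟨Or.inr ⟨ω, wPol_anti Set.subset_union_left hω, hωf⟩,
        (mem_Pol_withConstants_iff.1 (hω.1.support_mem f hωf.ne')).2⟩

/-- For a core language `Γ`, `IdPol⁺(Γ) = Pol⁺(Γ_c)`: an idempotent operation
lies in the positive clone of `Γ` iff it lies in the positive clone of `Γ_c`, the language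
obtained by adding all the unary cost functions `N_a`. -/
theorem idPolPlus_eq_polPlus_withConstants {D : Type} [Fintype D] [DecidableEq D] [Nonempty D]
    (Γ : VLang D) (hcore : IsCore Γ) :
    ∀ (k : ℕ) (f : Op D k),
      (f ∈ PolPlus Γ k ∧ Idem f) ↔ f ∈ PolPlus (withConstants Γ) k :=
  idPolPlus_eq_polPlus_withConstants_general Γ hcore
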